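/- Let 0 < ε < 1 and ρ_ε = (ε-1)/(ε+1). For m ∈ ℕ with m ≥ 1, the function μ(s) = 2sin(ms)/(1-ρ_ε^m) solves the integral equation (1/2)μ(s) - ∫_{0}^{2π} K^L(s,t;ε) μ(t) dt = sin(ms) for all s, where K^L(s,t;ε) = -(1/(2π)) ε/(1+ε²+(1-ε²)cos(s+t)). -/

import Mathlib

open Real MeasureTheory

/-! With `ρ = (ε - 1)/(ε + 1)` one has `ε / (1 + ε² + (1 - ε²) cos θ) = (1 - ρ²) / (2 |e^{iθ} - ρ|²)`,
so `K^L(s, ·)` is `-1/2` times the Poisson kernel of the unit disc at the point `ρ e^{-is}`, read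
along `t ↦ e^{it}`. The Poisson formula for the harmonic function `Im z^m` then gives
`∫ K^L(s,t) sin(mt) dt = (ρ^m / 2) sin(ms)`, i.e. `1/2 - K^L` multiplies `sin(m ·)` by `(1 - ρ^m)/2`. -/

section PoissonKernel

open Complex Metric InnerProductSpace

lemma norm_exp_mul_I_sub_ofReal_sq (α ρ : ℝ) :
    ‖cexp (α * I) - ρ‖ ^ 2 = 1 - 2 * ρ * Real.cos α + ρ ^ 2 := by
  rw [Complex.sq_norm, Complex.normSq_apply, exp_mul_I, ← ofReal_cos, ← ofReal_sin]
  simp only [sub_re, sub_im, add_re, add_im, mul_re, mul_im, ofReal_re, ofReal_im, I_re, I_im]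
  nlinarith [Real.sin_sq_add_cos_sq α]

lemma poissonKernel_circleMap_ofReal_mul_exp (ρ s t : ℝ) :
    poissonKernel 0 (ρ * cexp (↑(-s) * I)) (circleMap 0 1 t)
      = (1 - ρ ^ 2) / (1 - 2 * ρ * Real.cos (s + t) + ρ ^ 2) := by
  have hshift : circleMap 0 1 t - ρ * cexp (↑(-s) * I)
      = cexp (↑(-s) * I) * (cexp (↑(s + t) * I) - ρ) := by
    rw [circleMap_zero, ofReal_one, one_mul, mul_sub, ← Complex.exp_add]
    push_cast
    ring_nf
  rw [poissonKernel, sub_zero, sub_zero, hshift]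
  simp only [norm_mul, mul_pow, norm_exp_mul_I_sub_ofReal_sq, norm_exp_ofReal_mul_I, circleMap_zero,
    ofReal_one, one_mul, norm_real, Real.norm_eq_abs, sq_abs]
  ring

theorem integral_poissonKernel_mul_sin {ρ : ℝ} (hρ : |ρ| < 1) (s : ℝ) (m : ℕ) :
    ∫ t in (0:ℝ)..(2 * π), (1 - ρ ^ 2) / (1 - 2 * ρ * Real.cos (s + t) + ρ ^ 2) * Real.sin (m * t)
      = -(2 * π * ρ ^ m * Real.sin (m * s)) := by
  have hw : ρ * cexp (↑(-s) * I) ∈ ball (0:ℂ) 1 := by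
    rwa [mem_ball_zero_iff, norm_mul, norm_exp_ofReal_mul_I, norm_real, mul_one]
  have hf : HarmonicOnNhd (fun z : ℂ ↦ (z ^ m).im) (closedBall 0 1) :=
    fun z _ ↦ (analyticAt_id.pow m).harmonicAt_im
  have := hf.circleAverage_poissonKernel_smul hw
  rw [Real.circleAverage_def] at this
  simp only [Pi.smul_apply', poissonKernel_circleMap_ofReal_mul_exp] at this
  have hpow (x : ℝ) : cexp (x * I) ^ m = cexp (↑(m * x) * I) := by
    rw [← Complex.exp_nat_mul]; push_cast; ring_nf
  simp only [circleMap_zero, ofReal_one, one_mul, hpow, exp_ofReal_mul_I_im, smul_eq_mul,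
    mul_pow, ← ofReal_pow, im_ofReal_mul] at this
  rw [inv_mul_eq_iff_eq_mul₀ two_pi_pos.ne', mul_neg, Real.sin_neg] at this
  linear_combination this

end PoissonKernel

lemma abs_sub_one_div_add_one_lt_one {ε : ℝ} (hε : 0 < ε) : |(ε - 1) / (ε + 1)| < 1 := by
  rw [abs_div, abs_of_pos (by linarith : 0 < ε + 1), div_lt_one (by linarith), abs_lt]
  constructor <;> linarith

lemma div_one_add_sq_add_one_sub_sq_mul_cos {ε ρ : ℝ} (hε : ε + 1 ≠ 0)
    (hρ : ρ = (ε - 1) / (ε + 1)) (θ : ℝ) :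
    ε / (1 + ε ^ 2 + (1 - ε ^ 2) * Real.cos θ)
      = (1 - ρ ^ 2) / (2 * (1 - 2 * ρ * Real.cos θ + ρ ^ 2)) := by
  have hfactor : 1 + ε ^ 2 + (1 - ε ^ 2) * Real.cos θ
      = (ε + 1) ^ 2 / 2 * (1 - 2 * ρ * Real.cos θ + ρ ^ 2) := by
    subst hρ; field_simp; ring
  have hnum : 1 - ρ ^ 2 = 4 * ε / (ε + 1) ^ 2 := by
    subst hρ; field_simp; ring
  rw [hfactor, hnum]
  generalize 1 - 2 * ρ * Real.cos θ + ρ ^ 2 = D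
  field_simp
  ring

theorem stmt_4_general (ε : ℝ) (hε : 0 < ε) (m : ℕ) (hm : 1 ≤ m) (s : ℝ) :
    (1 / 2) * (2 * Real.sin (m * s) / (1 - ((ε - 1) / (ε + 1)) ^ m)) -
      ∫ t in (0:ℝ)..(2 * π),
        (-(1 / (2 * π)) * ε / (1 + ε ^ 2 + (1 - ε ^ 2) * Real.cos (s + t))) *
          (2 * Real.sin (m * t) / (1 - ((ε - 1) / (ε + 1)) ^ m))
    = Real.sin (m * s) := by
  set ρ := (ε - 1) / (ε + 1) with hρdef
  have hρ : |ρ| < 1 := abs_sub_one_div_add_one_lt_one hε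
  have hρm : 1 - ρ ^ m ≠ 0 := by
    have : |ρ ^ m| < 1 := by rw [abs_pow]; exact pow_lt_one₀ (abs_nonneg ρ) hρ (by omega)
    exact sub_ne_zero.mpr (abs_lt.mp this).2.ne'
  have hkernel : ∀ t, (-(1 / (2 * π)) * ε / (1 + ε ^ 2 + (1 - ε ^ 2) * Real.cos (s + t))) *
        (2 * Real.sin (m * t) / (1 - ρ ^ m))
      = -(1 / (2 * π * (1 - ρ ^ m))) *
          ((1 - ρ ^ 2) / (1 - 2 * ρ * Real.cos (s + t) + ρ ^ 2) * Real.sin (m * t)) := by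
    intro t
    rw [mul_div_assoc, div_one_add_sq_add_one_sub_sq_mul_cos (by linarith) hρdef]
    field_simp
  simp_rw [hkernel, intervalIntegral.integral_const_mul, integral_poissonKernel_mul_sin hρ]
  field_simp

/-- For `m ≥ 1`, `μ(s) = 2 sin(ms)/(1-ρ_ε^m)` solves
`(1/2)μ(s) - ∫₀^{2π} K^L(s,t;ε) μ(t) dt = sin(ms)`. -/
theorem stmt_4 (ε : ℝ) (hε : 0 < ε) (hε1 : ε < 1) (m : ℕ) (hm : 1 ≤ m) (s : ℝ) :
    (1 / 2) * (2 * Real.sin (m * s) / (1 - ((ε - 1) / (ε + 1)) ^ m)) -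
      ∫ t in (0:ℝ)..(2 * π),
        (-(1 / (2 * π)) * ε / (1 + ε ^ 2 + (1 - ε ^ 2) * Real.cos (s + t))) *
          (2 * Real.sin (m * t) / (1 - ((ε - 1) / (ε + 1)) ^ m))
    = Real.sin (m * s) :=
  stmt_4_general ε hε m hm s
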